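/- With L_{n,l}^{α,β} as defined (Stancu-type q-Bernstein-Schurer-Kantorovich operator), for all x ∈ [0,1]: L_{n,l}^{α,β}(t;q;x) = α/([n+1]_q+β) + 1/(([n+1]_q+β)[2]_q) + (2q[n+l]_q)/(([n+1]_q+β)[2]_q) · x. -/

import Mathlib

noncomputable section

/-- q-integer [n]_q = (1-q^n)/(1-q). -/
def qInt (q : ℝ) (n : ℕ) : ℝ := (1 - q ^ n) / (1 - q)

/-- q-factorial [n]_q!. -/
def qFact (q : ℝ) (n : ℕ) : ℝ := ∏ i ∈ Finset.range n, qInt q (i + 1)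

/-- q-binomial coefficient. -/
def qBinom (q : ℝ) (n k : ℕ) : ℝ := qFact q n / (qFact q k * qFact q (n - k))

/-- q-analogue (1-x)_q^m = ∏_{j<m} (1 - q^j x). -/
def qPoch (q x : ℝ) (m : ℕ) : ℝ := ∏ j ∈ Finset.range m, (1 - q ^ j * x)

/-- Riemann-type q-integral over [a,b]. -/
def qRInt (q a b : ℝ) (f : ℝ → ℝ) : ℝ :=
  (1 - q) * (b - a) * ∑' s : ℕ, f (a + (b - a) * q ^ s) * q ^ s

/-- q-Bernstein-Schurer basis function b_{n,l}^k(q;x). -/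
def bern (q : ℝ) (n l k : ℕ) (x : ℝ) : ℝ :=
  qBinom q (n + l) k * x ^ k * qPoch q x (n + l - k)

/-- Stancu-type q-Bernstein-Schurer-Kantorovich operator. -/
def Lop (q α β : ℝ) (n l : ℕ) (f : ℝ → ℝ) (x : ℝ) : ℝ :=
  (qInt q (n + 1) + β) * ∑ k ∈ Finset.range (n + l + 1),
    bern q n l k x * (q ^ k)⁻¹ *
      qRInt q ((qInt q k + α) / (qInt q (n + 1) + β))
        ((qInt q (k + 1) + α) / (qInt q (n + 1) + β)) f

/-! The `k`-th cell of the operator has width `q ^ k / D` (with `D = [n+1]_q + β`), which cancels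
the weight `(q ^ k)⁻¹`, and the Riemann-type `q`-integral of `t` over `[a, b]` is
`(b - a) (b + q a) / (1 + q)`. Using `q ^ k = 1 - (1 - q) [k]_q`, the `k`-th term becomes
`α / D + (1 + 2 q [k]_q) / (D (1 + q))`, which is affine in `[k]_q`. The claim then follows from
the two moment identities `∑ b_k = 1` and `∑ [k]_q b_k = [n+l]_q x` of the `q`-Bernstein basis,
both proved by induction on the degree through the `q`-Pascal rule. -/
open Finset

variable {q x : ℝ}

lemma qInt_eq_sum_pow (hq1 : q ≠ 1) (n : ℕ) : qInt q n = ∑ i ∈ range n, q ^ i := by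
  rw [geom_sum_eq hq1, qInt, ← neg_div_neg_eq, neg_sub, neg_sub]

lemma one_sub_mul_qInt (hq1 : q ≠ 1) (n : ℕ) : (1 - q) * qInt q n = 1 - q ^ n :=
  mul_div_cancel₀ _ (sub_ne_zero.mpr hq1.symm)

lemma qInt_add (hq1 : q ≠ 1) (a b : ℕ) : qInt q (a + b) = qInt q a + q ^ a * qInt q b := by
  simp only [qInt_eq_sum_pow hq1, sum_range_add, mul_sum, pow_add]

lemma qInt_succ (hq1 : q ≠ 1) (n : ℕ) : qInt q (n + 1) = qInt q n + q ^ n := by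
  simp only [qInt_eq_sum_pow hq1, sum_range_succ]

lemma qInt_pos (hq : 0 < q) (hq1 : q ≠ 1) {n : ℕ} (hn : n ≠ 0) : 0 < qInt q n := by
  rw [qInt_eq_sum_pow hq1]
  exact sum_pos (fun i _ => pow_pos hq i) (nonempty_range_iff.mpr hn)

lemma qFact_zero : qFact q 0 = 1 := prod_range_zero _

lemma qFact_succ (n : ℕ) : qFact q (n + 1) = qFact q n * qInt q (n + 1) :=
  prod_range_succ _ _

lemma qFact_ne_zero (hq : 0 < q) (hq1 : q ≠ 1) (n : ℕ) : qFact q n ≠ 0 :=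
  (prod_pos fun i _ => qInt_pos hq hq1 i.succ_ne_zero).ne'

section qBinom

variable (hq : 0 < q) (hq1 : q ≠ 1)
include hq hq1

lemma qBinom_zero_right (m : ℕ) : qBinom q m 0 = 1 := by
  rw [qBinom, Nat.sub_zero, qFact_zero, one_mul, div_self (qFact_ne_zero hq hq1 m)]

lemma qBinom_self (m : ℕ) : qBinom q m m = 1 := by
  rw [qBinom, Nat.sub_self, qFact_zero, mul_one, div_self (qFact_ne_zero hq hq1 m)]

lemma qBinom_succ_succ {k m : ℕ} (hk : k < m) :
    qBinom q (m + 1) (k + 1) = qBinom q m (k + 1) + q ^ (m - k) * qBinom q m k := by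
  obtain ⟨d, rfl⟩ : ∃ d, m = k + d + 1 := ⟨m - k - 1, by omega⟩
  have hsplit : qInt q (k + d + 1 + 1) = qInt q (d + 1) + q ^ (d + 1) * qInt q (k + 1) := by
    rw [← qInt_add hq1, show d + 1 + (k + 1) = k + d + 1 + 1 by omega]
  rw [qBinom, qBinom, qBinom, show k + d + 1 + 1 - (k + 1) = d + 1 by omega,
    show k + d + 1 - (k + 1) = d by omega, show k + d + 1 - k = d + 1 by omega,
    qFact_succ (k + d + 1), qFact_succ d, qFact_succ k, hsplit]
  have hk := qFact_ne_zero hq hq1 k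
  have hd := qFact_ne_zero hq hq1 d
  have hk1 := (qInt_pos hq hq1 (n := k + 1) (by omega)).ne'
  have hd1 := (qInt_pos hq hq1 (n := d + 1) (by omega)).ne'
  field_simp

end qBinom

lemma qPoch_zero : qPoch q x 0 = 1 := prod_range_zero _

lemma qPoch_succ (m : ℕ) : qPoch q x (m + 1) = qPoch q x m * (1 - q ^ m * x) :=
  prod_range_succ _ _

def qBernstein (q : ℝ) (m k : ℕ) (x : ℝ) : ℝ := qBinom q m k * x ^ k * qPoch q x (m - k)

lemma bern_eq_qBernstein (n l k : ℕ) : bern q n l k x = qBernstein q (n + l) k x := rfl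

section qBernstein

variable (hq : 0 < q) (hq1 : q ≠ 1)
include hq hq1

lemma qBernstein_succ_zero (m : ℕ) :
    qBernstein q (m + 1) 0 x = (1 - q ^ m * x) * qBernstein q m 0 x := by
  simp only [qBernstein, qBinom_zero_right hq hq1, Nat.sub_zero, qPoch_succ]
  ring

lemma qBernstein_succ_self (m : ℕ) :
    qBernstein q (m + 1) (m + 1) x = x * qBernstein q m m x := by
  simp only [qBernstein, qBinom_self hq hq1, Nat.sub_self, qPoch_zero]
  ring

lemma qBernstein_succ_succ {k m : ℕ} (hk : k < m) :
    qBernstein q (m + 1) (k + 1) x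
      = (1 - q ^ (m - (k + 1)) * x) * qBernstein q m (k + 1) x
        + q ^ (m - k) * x * qBernstein q m k x := by
  obtain ⟨d, rfl⟩ : ∃ d, m = k + d + 1 := ⟨m - k - 1, by omega⟩
  simp only [qBernstein, qBinom_succ_succ hq hq1 hk, show k + d + 1 + 1 - (k + 1) = d + 1 by omega,
    show k + d + 1 - (k + 1) = d by omega, show k + d + 1 - k = d + 1 by omega, qPoch_succ]
  ring

lemma sum_qBernstein_succ (c : ℕ → ℝ) (m : ℕ) :
    ∑ k ∈ range (m + 2), c k * qBernstein q (m + 1) k x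
      = ∑ k ∈ range (m + 1),
          (c k * (1 - q ^ (m - k) * x) + c (k + 1) * (q ^ (m - k) * x)) * qBernstein q m k x := by
  have hmid : ∑ k ∈ range m, c (k + 1) * qBernstein q (m + 1) (k + 1) x
      = ∑ k ∈ range m, c (k + 1) * ((1 - q ^ (m - (k + 1)) * x) * qBernstein q m (k + 1) x)
        + ∑ k ∈ range m, c (k + 1) * (q ^ (m - k) * x * qBernstein q m k x) := by
    rw [← sum_add_distrib]
    refine sum_congr rfl fun k hk => ?_
    rw [qBernstein_succ_succ hq hq1 (mem_range.mp hk)]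
    ring
  simp only [add_mul, sum_add_distrib]
  rw [sum_range_succ' _ (m + 1), sum_range_succ _ m, hmid, qBernstein_succ_zero hq hq1,
    qBernstein_succ_self hq hq1, sum_range_succ' (fun k => c k * _ * _),
    sum_range_succ (fun k => c (k + 1) * _ * _), Nat.sub_self, pow_zero]
  simp only [mul_assoc, Nat.sub_zero]
  ring

lemma sum_qBernstein (m : ℕ) : ∑ k ∈ range (m + 1), qBernstein q m k x = 1 := by
  induction m with
  | zero => simp [qBernstein, qBinom_zero_right hq hq1, qPoch_zero]
  | succ m ih =>
    have hstep := sum_qBernstein_succ (x := x) hq hq1 (fun _ => 1) m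
    simp only [one_mul, sub_add_cancel] at hstep
    rw [hstep, ih]

lemma sum_qInt_mul_qBernstein (m : ℕ) :
    ∑ k ∈ range (m + 1), qInt q k * qBernstein q m k x = qInt q m * x := by
  induction m with
  | zero => simp [qInt]
  | succ m ih =>
    have hcoeff : ∀ k ∈ range (m + 1),
        (qInt q k * (1 - q ^ (m - k) * x) + qInt q (k + 1) * (q ^ (m - k) * x)) * qBernstein q m k x
          = qInt q k * qBernstein q m k x + q ^ m * x * qBernstein q m k x := fun k hk => by
      rw [qInt_succ hq1, ← pow_mul_pow_sub q (Nat.lt_succ_iff.mp (mem_range.mp hk))]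
      ring
    rw [sum_qBernstein_succ hq hq1, sum_congr rfl hcoeff, sum_add_distrib, ← mul_sum, ih,
      sum_qBernstein hq hq1, qInt_succ hq1]
    ring

end qBernstein

lemma qRInt_id (hq : |q| < 1) (a b : ℝ) :
    qRInt q a b (fun t => t) = (b - a) * (b + q * a) / (1 + q) := by
  have hq2 : |q ^ 2| < 1 := by rw [abs_pow, sq_lt_one_iff_abs_lt_one, abs_abs]; exact hq
  have hgeom : ∑' s : ℕ, (a + (b - a) * q ^ s) * q ^ s = a * (1 - q)⁻¹ + (b - a) * (1 - q ^ 2)⁻¹ := by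
    simp only [add_mul, mul_assoc, ← pow_add, ← two_mul, pow_mul]
    rw [Summable.tsum_add ((summable_geometric_of_abs_lt_one hq).mul_left a)
      ((summable_geometric_of_abs_lt_one hq2).mul_left (b - a)), tsum_mul_left, tsum_mul_left,
      tsum_geometric_of_abs_lt_one hq, tsum_geometric_of_abs_lt_one hq2]
  have h1 : 1 - q ≠ 0 := by linarith [le_abs_self q]
  have h2 : 1 + q ≠ 0 := by linarith [neg_abs_le q]
  rw [qRInt, hgeom, show 1 - q ^ 2 = (1 - q) * (1 + q) by ring]
  field_simp
  ring

lemma qRInt_id_cell (hq0 : q ≠ 0) (hq : |q| < 1) {D : ℝ} (hD : D ≠ 0) (α : ℝ) (k : ℕ) :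
    D * (q ^ k)⁻¹ * qRInt q ((qInt q k + α) / D) ((qInt q (k + 1) + α) / D) (fun t => t)
      = α / D + 1 / (D * (1 + q)) + 2 * q * qInt q k / (D * (1 + q)) := by
  have hq1 : q ≠ 1 := by rintro rfl; norm_num at hq
  have h2 : 1 + q ≠ 0 := by linarith [neg_abs_le q]
  have hpow : q ^ k = 1 - (1 - q) * qInt q k := by rw [one_sub_mul_qInt hq1]; ring
  have hqk : q ^ k ≠ 0 := pow_ne_zero k hq0
  rw [qRInt_id hq, qInt_succ hq1]
  field_simp
  rw [hpow]
  ring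

theorem Lop_id_general (q α β : ℝ) (hq : 0 < q) (hq1 : q < 1) (hβ : 0 < β)
    (n l : ℕ) (x : ℝ) :
    Lop q α β n l (fun t => t) x =
      α / (qInt q (n + 1) + β) + 1 / ((qInt q (n + 1) + β) * (1 + q))
        + 2 * q * qInt q (n + l) / ((qInt q (n + 1) + β) * (1 + q)) * x := by
  set D := qInt q (n + 1) + β
  have hD : D ≠ 0 := (add_pos (qInt_pos hq hq1.ne n.succ_ne_zero) hβ).ne'
  have habs : |q| < 1 := abs_lt.mpr ⟨by linarith, hq1⟩
  have hnode (k : ℕ) : D * (bern q n l k x * (q ^ k)⁻¹ *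
      qRInt q ((qInt q k + α) / D) ((qInt q (k + 1) + α) / D) (fun t => t))
        = (α / D + 1 / (D * (1 + q))) * qBernstein q (n + l) k x
          + 2 * q / (D * (1 + q)) * (qInt q k * qBernstein q (n + l) k x) := by
    rw [bern_eq_qBernstein]
    linear_combination qBernstein q (n + l) k x * qRInt_id_cell hq.ne' habs hD α k
  rw [Lop, mul_sum, sum_congr rfl fun k _ => hnode k, sum_add_distrib, ← mul_sum, ← mul_sum,
    sum_qBernstein hq hq1.ne, sum_qInt_mul_qBernstein hq hq1.ne]
  ring

theorem Lop_id (q α β : ℝ) (hq : 0 < q) (hq1 : q < 1) (hβ : 0 < β) (hβα : β ≤ α)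
    (n l : ℕ) (x : ℝ) (hx0 : 0 ≤ x) (hx1 : x ≤ 1) :
    Lop q α β n l (fun t => t) x =
      α / (qInt q (n + 1) + β) + 1 / ((qInt q (n + 1) + β) * (1 + q))
        + 2 * q * qInt q (n + l) / ((qInt q (n + 1) + β) * (1 + q)) * x :=
  Lop_id_general q α β hq hq1 hβ n l x
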